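/- With constant impact λ^(n) = λ > 0 for all n, zero risk aversion φ = 0, and α = 1, the backward recursion μ^(n) = 2λ − λ²·4/(4μ^(n+1)) = 2λ − λ²/μ^(n+1) with μ^(N) = 2λ has the closed-form solution μ^(n) = λ(N − n + 2)/(N − n + 1), and the resulting optimal fractions θ^(n) = 1 − λ·2/(2μ^(n+1)) = 1/(N − n + 1) yield the TWAP strategy (equal trade sizes x^(n) = Q/N each period). -/

import Mathlib

/-!
The map μ ↦ 2λ − λ²/μ sends λ(m + 1)/m to λ(m + 2)/(m + 1), so backward induction from
μ^(N) = 2λ = λ(1 + 1)/1 gives μ^(n) = λ(m + 1)/m, where m = N − n + 1 is the number of periods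
left. Then θ^(n) = 1 − λ/μ^(n+1) = 1/m: each period sells an equal share of what remains, so
forward induction gives Q^(n) = Q·m/N and every trade θ^(n) Q^(n) equals Q/N.
-/

theorem impact_recursion_step (lam r : ℝ) (hr : r + 1 ≠ 0) :
    2 * lam - lam ^ 2 / (lam * (r + 1) / r) = lam * (r + 2) / (r + 1) := by
  -- the cases `lam = 0` and `r = 0` hold only through `x / 0 = 0`
  rcases eq_or_ne lam 0 with rfl | hlam
  · simp
  rcases eq_or_ne r 0 with rfl | hr0
  · simp only [zero_add, mul_one, div_zero, sub_zero, div_one]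
    ring
  field_simp
  ring

theorem one_sub_div_impact (lam r : ℝ) (hlam : lam ≠ 0) (hr : r + 1 ≠ 0) :
    1 - lam / (lam * (r + 1) / r) = 1 / (r + 1) := by
  rcases eq_or_ne r 0 with rfl | hr0
  · simp
  field_simp
  ring

lemma natCast_sub_add_one_ne_zero {N n : ℕ} (h : n ≤ N) : (N : ℝ) - n + 1 ≠ 0 := by
  have : (n : ℝ) ≤ N := by exact_mod_cast h
  linarith

section

variable {N : ℕ} {lam : ℝ}

theorem impact_closed_form {mu : ℕ → ℝ} (hmuN : mu N = 2 * lam)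
    (hmu : ∀ n, 1 ≤ n → n < N → mu n = 2 * lam - lam ^ 2 / mu (n + 1)) {n : ℕ} (hn : 1 ≤ n)
    (hnN : n ≤ N) : mu n = lam * ((N : ℝ) - n + 2) / ((N : ℝ) - n + 1) := by
  induction hnN using Nat.decreasingInduction with
  | self =>
    simp only [hmuN, sub_self, zero_add, div_one]
    ring
  | of_succ k hk ih =>
    have hr : (N : ℝ) - (k + 1 : ℕ) + 1 = N - k := by push_cast; ring
    rw [hmu k hn hk, ih (by omega), hr,
      show (N : ℝ) - (k + 1 : ℕ) + 2 = N - k + 1 by push_cast; ring,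
      impact_recursion_step _ _ (natCast_sub_add_one_ne_zero hk.le)]

theorem fraction_closed_form (hlam : lam ≠ 0) {mu theta : ℕ → ℝ} (hmuN : mu N = 2 * lam)
    (hmu : ∀ n, 1 ≤ n → n < N → mu n = 2 * lam - lam ^ 2 / mu (n + 1))
    (htheta : ∀ n, 1 ≤ n → n < N → theta n = 1 - lam / mu (n + 1)) (hthetaN : theta N = 1)
    {n : ℕ} (hn : 1 ≤ n) (hnN : n ≤ N) : theta n = 1 / ((N : ℝ) - n + 1) := by
  rcases hnN.lt_or_eq with hlt | rfl
  · have hr : (N : ℝ) - (n + 1 : ℕ) + 1 = N - n := by push_cast; ring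
    rw [htheta n hn hlt, impact_closed_form hmuN hmu (by omega) hlt, hr,
      show (N : ℝ) - (n + 1 : ℕ) + 2 = N - n + 1 by push_cast; ring,
      one_sub_div_impact _ _ hlam (natCast_sub_add_one_ne_zero hlt.le)]
  · simp [hthetaN]

theorem inventory_closed_form {theta Qf : ℕ → ℝ} {Q0 : ℝ}
    (htheta : ∀ n, 1 ≤ n → n ≤ N → theta n = 1 / ((N : ℝ) - n + 1)) (hQ1 : Qf 1 = Q0)
    (hQ : ∀ n, 1 ≤ n → n < N → Qf (n + 1) = Qf n - theta n * Qf n) {n : ℕ} (hn : 1 ≤ n)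
    (hnN : n ≤ N) : Qf n = Q0 * ((N : ℝ) - n + 1) / N := by
  induction n, hn using Nat.le_induction with
  | base =>
    have hN : (N : ℝ) ≠ 0 := Nat.cast_ne_zero.mpr (by omega)
    simp [hQ1, hN]
  | succ k hk ih =>
    have hm := natCast_sub_add_one_ne_zero (N := N) (n := k) (by omega)
    rw [hQ k hk hnN, htheta k hk (by omega), ih (by omega)]
    field_simp
    push_cast
    ring

end

theorem twap_closed_form_general (N : ℕ) (lam Q0 : ℝ) (hlam : 0 < lam)
    (mu theta Qf : ℕ → ℝ)
    (hmuN : mu N = 2 * lam)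
    (hmu : ∀ n, 1 ≤ n → n < N → mu n = 2 * lam - lam ^ 2 / mu (n + 1))
    (htheta : ∀ n, 1 ≤ n → n < N → theta n = 1 - lam / mu (n + 1))
    (hthetaN : theta N = 1)
    (hQ1 : Qf 1 = Q0)
    (hQ : ∀ n, 1 ≤ n → n < N → Qf (n + 1) = Qf n - theta n * Qf n) :
    ∀ n, 1 ≤ n → n ≤ N →
      mu n = lam * ((N : ℝ) - n + 2) / ((N : ℝ) - n + 1) ∧
      theta n = 1 / ((N : ℝ) - n + 1) ∧
      theta n * Qf n = Q0 / N := by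
  have htheta' : ∀ n, 1 ≤ n → n ≤ N → theta n = 1 / ((N : ℝ) - n + 1) :=
    fun n hn hnN ↦ fraction_closed_form hlam.ne' hmuN hmu htheta hthetaN hn hnN
  intro n hn hnN
  refine ⟨impact_closed_form hmuN hmu hn hnN, htheta' n hn hnN, ?_⟩
  rw [htheta' n hn hnN, inventory_closed_form htheta' hQ1 hQ hn hnN]
  field_simp [natCast_sub_add_one_ne_zero hnN]

theorem twap_closed_form (N : ℕ) (hN : 1 ≤ N) (lam Q0 : ℝ) (hlam : 0 < lam)
    (mu theta Qf : ℕ → ℝ)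
    (hmuN : mu N = 2 * lam)
    (hmu : ∀ n, 1 ≤ n → n < N → mu n = 2 * lam - lam ^ 2 / mu (n + 1))
    (htheta : ∀ n, 1 ≤ n → n < N → theta n = 1 - lam / mu (n + 1))
    (hthetaN : theta N = 1)
    (hQ1 : Qf 1 = Q0)
    (hQ : ∀ n, 1 ≤ n → n < N → Qf (n + 1) = Qf n - theta n * Qf n) :
    ∀ n, 1 ≤ n → n ≤ N →
      mu n = lam * ((N : ℝ) - n + 2) / ((N : ℝ) - n + 1) ∧
      theta n = 1 / ((N : ℝ) - n + 1) ∧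
      theta n * Qf n = Q0 / N :=
  twap_closed_form_general N lam Q0 hlam mu theta Qf hmuN hmu htheta hthetaN hQ1 hQ
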